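/- Let n ≥ 3 and let d ∈ ℝ^{1,n} satisfy d·d > 0 and d·E > 0 for every exceptional class E ∈ ℰ_K. Then there exists w ∈ W_n such that w(d) is reduced; moreover the reduced representative is unique: if w_1, w_2 ∈ W_n are such that both w_1(d) and w_2(d) are reduced, then w_1(d) = w_2(d). (Proposition 2.11(4): the reduced classes form a fundamental domain of the K-symplectic cone under the action of W_n.) -/

import Mathlib

open Finset

noncomputable section

/-- The intersection pairing on ℝ^{1,n}: coordinate `0` is the coefficient of `H`,
coordinate `i.succ` is the coefficient of `E_{i+1}`.  `H·H = 1`, `E_i·E_i = -1`,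
distinct basis vectors are orthogonal. -/
def ip (n : ℕ) (x y : Fin (n + 1) → ℝ) : ℝ :=
  x 0 * y 0 - ∑ i : Fin n, x i.succ * y i.succ

/-- The canonical class `K = -3H + E_1 + ⋯ + E_n`. -/
def Kc (n : ℕ) : Fin (n + 1) → ℝ := fun j => if (j : ℕ) = 0 then -3 else 1

/-- The reflection `x ↦ x + (x·l)l` along `l`. -/
def reflAlong (n : ℕ) (l : Fin (n + 1) → ℝ) : Function.End (Fin (n + 1) → ℝ) :=
  fun x => x + ip n x l • l

/-- The simple roots: `l_0 = H - E_1 - E_2 - E_3` and `l_i = E_i - E_{i+1}`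
for `1 ≤ i ≤ n - 1`. -/
def root (n : ℕ) (i : Fin n) : Fin (n + 1) → ℝ :=
  if (i : ℕ) = 0 then
    fun j => if (j : ℕ) = 0 then 1 else if (j : ℕ) ≤ 3 then -1 else 0
  else
    fun j => if (j : ℕ) = (i : ℕ) then 1 else if (j : ℕ) = (i : ℕ) + 1 then -1 else 0

/-- The Weyl group `W_n`, generated by the simple reflections `s_{l_0}, …, s_{l_{n-1}}`.
(The generators are involutions, so the submonoid they generate coincides with the
subgroup they generate.) -/
def Wgroup (n : ℕ) : Submonoid (Function.End (Fin (n + 1) → ℝ)) :=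
  Submonoid.closure (Set.range fun i : Fin n => reflAlong n (root n i))

/-- The class `E_n`. -/
def En (n : ℕ) : Fin (n + 1) → ℝ := fun j => if (j : ℕ) = n then 1 else 0

/-- The set `ℰ_K` of exceptional classes: the `W_n`-orbit of `E_n`. -/
def EK (n : ℕ) : Set (Fin (n + 1) → ℝ) := {e | ∃ w ∈ Wgroup n, e = w (En n)}

/-- The coefficients `m_1, …, m_n` of a class `νH - m_1E_1 - ⋯ - m_nE_n`
(so `mcoord n v i = -(v i.succ)`). -/
def mcoord (n : ℕ) (v : Fin (n + 1) → ℝ) : Fin n → ℝ := fun i => -(v i.succ)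

/-- A class `νH - m_1E_1 - ⋯ - m_nE_n` is reduced if
`m_1 ≥ m_2 ≥ ⋯ ≥ m_n ≥ 0` and `ν ≥ m_1 + m_2 + m_3`. -/
def IsReducedVec (n : ℕ) (v : Fin (n + 1) → ℝ) : Prop :=
  Antitone (mcoord n v) ∧ (∀ i, 0 ≤ mcoord n v i) ∧
    ∑ i ∈ Finset.univ.filter (fun i : Fin n => (i : ℕ) < 3), mcoord n v i ≤ v 0

/-!
`W_n` is generated by the reflections in the simple roots `l_i`, which satisfy `l_i · l_i = -2` and
`l_i · l_j ∈ {0, 1}` for `i ≠ j`; so the classical argument for simply laced Coxeter groups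
applies: if `ℓ(w s_i) ≥ ℓ(w)` then `w l_i` is a nonnegative combination of simple roots. Hence if
`x` and `w x` both pair nonnegatively with every simple root (are dominant), then `w x = x`.
Reduced classes are exactly the dominant classes with `m_n ≥ 0`, which gives uniqueness.

For existence, the integral class `ρ = (n² | n, n - 1, …, 1)` has positive square and pairs
positively with every simple root. Its orbit consists of integral future timelike classes, and since
`d` is future timelike (`d · d > 0`, and `d · H > 0` because `H = (H - E_1 - E_2) + E_1 + E_2` is a
sum of exceptional classes) only finitely many orbit points `q` have `d · q` below a given bound.
If `q = w ρ` minimises `d · q`, then `w⁻¹ d` is dominant, and `w⁻¹ d · E_n = d · w E_n > 0`.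
-/

section

variable {n : ℕ}

lemma ip_comm (x y : Fin (n + 1) → ℝ) : ip n x y = ip n y x := by
  simp only [ip, mul_comm]

lemma ip_add_left (x x' y : Fin (n + 1) → ℝ) : ip n (x + x') y = ip n x y + ip n x' y := by
  simp only [ip, Pi.add_apply, add_mul, sum_add_distrib]; ring

lemma ip_smul_left (c : ℝ) (x y : Fin (n + 1) → ℝ) : ip n (c • x) y = c * ip n x y := by
  simp only [ip, Pi.smul_apply, smul_eq_mul, mul_sub, mul_sum, mul_assoc]

lemma ip_add_right (x y y' : Fin (n + 1) → ℝ) : ip n x (y + y') = ip n x y + ip n x y' := by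
  rw [ip_comm, ip_add_left, ip_comm y, ip_comm y']

lemma ip_smul_right (c : ℝ) (x y : Fin (n + 1) → ℝ) : ip n x (c • y) = c * ip n x y := by
  rw [ip_comm, ip_smul_left, ip_comm]

lemma ip_neg_right (x y : Fin (n + 1) → ℝ) : ip n x (-y) = -ip n x y := by
  simpa using ip_smul_right (-1) x y

lemma ip_sub_right (x y y' : Fin (n + 1) → ℝ) : ip n x (y - y') = ip n x y - ip n x y' := by
  rw [sub_eq_add_neg, ip_add_right, ip_neg_right, sub_eq_add_neg]

lemma ip_zero_right (x : Fin (n + 1) → ℝ) : ip n x 0 = 0 := by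
  simpa using ip_smul_right 0 x 0

lemma reflAlong_apply (l x : Fin (n + 1) → ℝ) : reflAlong n l x = x + ip n x l • l := rfl

lemma isLinearMap_reflAlong (l : Fin (n + 1) → ℝ) : IsLinearMap ℝ (reflAlong n l) := by
  constructor <;> intros <;> simp only [reflAlong_apply, ip_add_left, ip_smul_left] <;> module

section reflection

variable {l : Fin (n + 1) → ℝ}

lemma ip_reflAlong_reflAlong (hl : ip n l l = -2) (x y : Fin (n + 1) → ℝ) :
    ip n (reflAlong n l x) (reflAlong n l y) = ip n x y := by
  simp only [reflAlong_apply, ip_add_left, ip_add_right, ip_smul_left, ip_smul_right, hl,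
    ip_comm l y]
  ring

lemma reflAlong_reflAlong (hl : ip n l l = -2) (x : Fin (n + 1) → ℝ) :
    reflAlong n l (reflAlong n l x) = x := by
  simp only [reflAlong_apply, ip_add_left, ip_smul_left, hl]
  module

lemma reflAlong_mul_self (hl : ip n l l = -2) : reflAlong n l * reflAlong n l = 1 :=
  funext (reflAlong_reflAlong hl)

lemma reflAlong_self (hl : ip n l l = -2) : reflAlong n l l = -l := by
  rw [reflAlong_apply, hl]; module

lemma reflAlong_of_ip_eq_zero {x : Fin (n + 1) → ℝ} (h : ip n x l = 0) : reflAlong n l x = x := by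
  simp [reflAlong_apply, h]

end reflection

section rankTwo

variable {a b : Fin (n + 1) → ℝ}

lemma reflAlong_mul_reflAlong_mul_reflAlong_of_ip_eq_zero (ha : ip n a a = -2)
    (hab : ip n a b = 0) :
    reflAlong n a * reflAlong n b * reflAlong n a = reflAlong n b := by
  have hba : ip n b a = 0 := by rw [ip_comm, hab]
  funext x
  show reflAlong n a (reflAlong n b (reflAlong n a x)) = reflAlong n b x
  simp only [reflAlong_apply, ip_add_left, ip_smul_left, ha, hab, hba]
  module

lemma reflAlong_braid (ha : ip n a a = -2) (hb : ip n b b = -2) (hab : ip n a b = 1) :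
    reflAlong n a * reflAlong n b * reflAlong n a =
      reflAlong n b * reflAlong n a * reflAlong n b := by
  have hba : ip n b a = 1 := by rw [ip_comm, hab]
  funext x
  show reflAlong n a (reflAlong n b (reflAlong n a x)) =
    reflAlong n b (reflAlong n a (reflAlong n b x))
  simp only [reflAlong_apply, ip_add_left, ip_smul_left, ha, hb, hab, hba]
  module

lemma reflAlong_reflAlong_of_ip_eq_one (ha : ip n a a = -2) (hab : ip n a b = 1) :
    reflAlong n a (reflAlong n b a) = b := by
  have hba : ip n b a = 1 := by rw [ip_comm, hab]
  simp only [reflAlong_apply, ip_add_left, ip_smul_left, ha, hab, hba]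
  module

end rankTwo

section reflGroup

variable {ι : Type*} {α : ι → Fin (n + 1) → ℝ}

def reflGroup (n : ℕ) (α : ι → Fin (n + 1) → ℝ) : Submonoid (Function.End (Fin (n + 1) → ℝ)) :=
  Submonoid.closure (Set.range fun i => reflAlong n (α i))

/-- Since `α i · α i = -2`, the value `1` is the usual `(α i, α j) = -1` of a simply laced
root system (`s_i s_j` of order `3`) and `0` means that `s_i` and `s_j` commute. -/
structure IsSimplyLaced (n : ℕ) (α : ι → Fin (n + 1) → ℝ) : Prop where
  ip_self : ∀ i, ip n (α i) (α i) = -2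
  ip_of_ne : ∀ i j, i ≠ j → ip n (α i) (α j) = 0 ∨ ip n (α i) (α j) = 1

lemma reflAlong_mem_reflGroup (i : ι) : reflAlong n (α i) ∈ reflGroup n α :=
  Submonoid.subset_closure ⟨i, rfl⟩

lemma isLinearMap_of_mem_reflGroup {w : Function.End (Fin (n + 1) → ℝ)} (hw : w ∈ reflGroup n α) :
    IsLinearMap ℝ w := by
  induction hw using Submonoid.closure_induction with
  | mem _ h => obtain ⟨i, rfl⟩ := h; exact isLinearMap_reflAlong _
  | one => exact LinearMap.id.isLinear
  | mul f g _ _ hf hg => exact ((IsLinearMap.mk' f hf).comp (IsLinearMap.mk' g hg)).isLinear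

lemma ip_apply_apply_of_mem_reflGroup (hα : ∀ i, ip n (α i) (α i) = -2)
    {w : Function.End (Fin (n + 1) → ℝ)} (hw : w ∈ reflGroup n α) (x y : Fin (n + 1) → ℝ) :
    ip n (w x) (w y) = ip n x y := by
  induction hw using Submonoid.closure_induction generalizing x y with
  | mem _ h => obtain ⟨i, rfl⟩ := h; exact ip_reflAlong_reflAlong (hα i) x y
  | one => rfl
  | mul f g _ _ hf hg => exact (hf (g x) (g y)).trans (hg x y)

lemma exists_inverse_mem_reflGroup (hα : ∀ i, ip n (α i) (α i) = -2)
    {w : Function.End (Fin (n + 1) → ℝ)} (hw : w ∈ reflGroup n α) :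
    ∃ v ∈ reflGroup n α, v * w = 1 ∧ w * v = 1 := by
  induction hw using Submonoid.closure_induction with
  | mem _ h =>
    obtain ⟨i, rfl⟩ := h
    exact ⟨_, reflAlong_mem_reflGroup i, reflAlong_mul_self (hα i), reflAlong_mul_self (hα i)⟩
  | one => exact ⟨1, one_mem _, mul_one 1, mul_one 1⟩
  | mul f g _ _ hf hg =>
    obtain ⟨f', hf', hff', hf'f⟩ := hf
    obtain ⟨g', hg', hgg', hg'g⟩ := hg
    refine ⟨g' * f', mul_mem hg' hf', ?_, ?_⟩
    · rw [mul_assoc, ← mul_assoc f', hff', one_mul, hgg']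
    · rw [mul_assoc, ← mul_assoc g, hg'g, one_mul, hf'f]

lemma ip_apply_left_of_mem_reflGroup (hα : ∀ i, ip n (α i) (α i) = -2)
    {w v : Function.End (Fin (n + 1) → ℝ)} (hw : w ∈ reflGroup n α) (hwv : w * v = 1)
    (x y : Fin (n + 1) → ℝ) : ip n (w x) y = ip n x (v y) := by
  have hy : w (v y) = y := congrFun hwv y
  rw [← ip_apply_apply_of_mem_reflGroup hα hw x (v y), hy]

end reflGroup

section reflLength

variable {ι : Type*} {α : ι → Fin (n + 1) → ℝ}

def reflWord (n : ℕ) (α : ι → Fin (n + 1) → ℝ) (L : List ι) : Function.End (Fin (n + 1) → ℝ) :=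
  (L.map fun i => reflAlong n (α i)).prod

def reflLength (n : ℕ) (α : ι → Fin (n + 1) → ℝ) (w : Function.End (Fin (n + 1) → ℝ)) : ℕ :=
  sInf {k | ∃ L : List ι, L.length = k ∧ reflWord n α L = w}

@[simp]
lemma reflWord_nil : reflWord n α [] = 1 := rfl

@[simp]
lemma reflWord_append (L L' : List ι) :
    reflWord n α (L ++ L') = reflWord n α L * reflWord n α L' := by
  simp [reflWord]

@[simp]
lemma reflWord_singleton (i : ι) : reflWord n α [i] = reflAlong n (α i) := by
  simp [reflWord]

lemma exists_reflWord_eq_of_mem_reflGroup {w : Function.End (Fin (n + 1) → ℝ)}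
    (hw : w ∈ reflGroup n α) : ∃ L, reflWord n α L = w := by
  induction hw using Submonoid.closure_induction with
  | mem _ h => obtain ⟨i, rfl⟩ := h; exact ⟨[i], reflWord_singleton i⟩
  | one => exact ⟨[], rfl⟩
  | mul f g _ _ hf hg =>
    obtain ⟨L, rfl⟩ := hf
    obtain ⟨L', rfl⟩ := hg
    exact ⟨L ++ L', reflWord_append L L'⟩

lemma exists_reflWord_length_eq {w : Function.End (Fin (n + 1) → ℝ)} (hw : w ∈ reflGroup n α) :
    ∃ L, L.length = reflLength n α w ∧ reflWord n α L = w := by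
  obtain ⟨L, hL⟩ := exists_reflWord_eq_of_mem_reflGroup hw
  exact Nat.sInf_mem (s := {k | ∃ L : List ι, L.length = k ∧ reflWord n α L = w})
    ⟨L.length, L, rfl, hL⟩

lemma reflLength_le_length {L : List ι} {w : Function.End (Fin (n + 1) → ℝ)}
    (h : reflWord n α L = w) : reflLength n α w ≤ L.length :=
  Nat.sInf_le ⟨L, rfl, h⟩

lemma eq_one_of_reflLength_eq_zero {w : Function.End (Fin (n + 1) → ℝ)} (hw : w ∈ reflGroup n α)
    (h : reflLength n α w = 0) : w = 1 := by
  obtain ⟨L, hL, rfl⟩ := exists_reflWord_length_eq hw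
  rw [List.eq_nil_of_length_eq_zero (hL.trans h), reflWord_nil]

lemma reflLength_mul_reflAlong_le {w : Function.End (Fin (n + 1) → ℝ)} (hw : w ∈ reflGroup n α)
    (i : ι) : reflLength n α (w * reflAlong n (α i)) ≤ reflLength n α w + 1 := by
  obtain ⟨L, hL, rfl⟩ := exists_reflWord_length_eq hw
  simpa [hL] using reflLength_le_length (reflWord_append (α := α) L [i])

lemma exists_reflLength_mul_reflAlong_lt (hα : ∀ i, ip n (α i) (α i) = -2)
    {w : Function.End (Fin (n + 1) → ℝ)} (hw : w ∈ reflGroup n α) (h : reflLength n α w ≠ 0) :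
    ∃ t, reflLength n α (w * reflAlong n (α t)) < reflLength n α w := by
  obtain ⟨L, hL, rfl⟩ := exists_reflWord_length_eq hw
  obtain ⟨L', t, rfl⟩ := List.eq_nil_or_concat L |>.resolve_left (by rintro rfl; simp_all)
  refine ⟨t, ?_⟩
  have := reflLength_le_length (α := α) (L := L') rfl
  simp only [List.concat_eq_append, List.length_append, List.length_singleton, reflWord_append,
    reflWord_singleton, mul_assoc, reflAlong_mul_self (hα t), mul_one] at hL ⊢
  omega

end reflLength

section positivity

variable {ι : Type*} {α : ι → Fin (n + 1) → ℝ}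

local notation "ℓ" => reflLength n α
local notation:max "σ" i:max => reflAlong n (α i)

-- The rank-two step of the positivity argument below, in the dihedral group `⟨s_s, s_t⟩`.
lemma reflLength_le_mul_or_apply_eq (hα : IsSimplyLaced n α) {w : Function.End (Fin (n + 1) → ℝ)}
    (hw : w ∈ reflGroup n α) {s t : ι} (hst : s ≠ t) (hwt : ℓ (w * σ t) < ℓ w)
    (hws : ℓ w ≤ ℓ (w * σ s)) :
    ℓ (w * σ t) ≤ ℓ (w * σ t * σ s) ∨ ℓ (w * σ t * σ s) < ℓ (w * σ t) ∧
      ℓ (w * σ t * σ s) ≤ ℓ (w * σ t * σ s * σ t) ∧ w (α s) = (w * σ t * σ s) (α t) := by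
  have hu_mem : w * σ t ∈ reflGroup n α := mul_mem hw (reflAlong_mem_reflGroup t)
  set v := w * σ t * σ s with hv
  have hv_mem : v ∈ reflGroup n α := mul_mem hu_mem (reflAlong_mem_reflGroup s)
  have hw_eq : w = v * σ s * σ t := by
    simp only [hv, mul_assoc, reflAlong_mul_self (hα.ip_self s), reflAlong_mul_self (hα.ip_self t),
      mul_one]
  have hws_eq : w * σ s = v * (σ s * σ t * σ s) := by rw [hw_eq]; simp only [mul_assoc]
  have h₁ := reflLength_mul_reflAlong_le hv_mem t
  refine (le_or_gt _ _).imp_right fun hvu => ⟨hvu, ?_⟩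
  rcases hα.ip_of_ne s t hst with h | h
  · -- `s_s s_t s_s = s_t` would make `w s_s` shorter than `w`
    rw [hws_eq, reflAlong_mul_reflAlong_mul_reflAlong_of_ip_eq_zero (hα.ip_self s) h] at hws
    omega
  refine ⟨not_lt.mp fun hvt => ?_, ?_⟩
  · -- the braid relation would make `w s_s` shorter than `w`
    have hbraid : w * σ s = v * σ t * σ s * σ t := by
      rw [hws_eq, reflAlong_braid (hα.ip_self s) (hα.ip_self t) h]; simp only [mul_assoc]
    have h₂ := reflLength_mul_reflAlong_le (mul_mem hv_mem (reflAlong_mem_reflGroup t)) s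
    have h₃ := reflLength_mul_reflAlong_le
      (mul_mem (mul_mem hv_mem (reflAlong_mem_reflGroup t)) (reflAlong_mem_reflGroup s)) t
    rw [← hbraid] at h₃
    omega
  · rw [hw_eq]
    show v (reflAlong n (α s) (reflAlong n (α t) (α s))) = _
    rw [reflAlong_reflAlong_of_ip_eq_one (hα.ip_self s) h]

theorem apply_mem_hull_of_reflLength_le (hα : IsSimplyLaced n α)
    {w : Function.End (Fin (n + 1) → ℝ)} (hw : w ∈ reflGroup n α) {s : ι}
    (hws : ℓ w ≤ ℓ (w * σ s)) : w (α s) ∈ PointedCone.hull ℝ (Set.range α) := by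
  induction hk : ℓ w using Nat.strong_induction_on generalizing w s with
  | _ k ih =>
  subst hk
  by_cases h0 : ℓ w = 0
  · rw [eq_one_of_reflLength_eq_zero hw h0]
    exact PointedCone.subset_hull ⟨s, rfl⟩
  obtain ⟨t, hwt⟩ := exists_reflLength_mul_reflAlong_lt hα.ip_self hw h0
  have hst : s ≠ t := by rintro rfl; omega
  have hu_mem : w * σ t ∈ reflGroup n α := mul_mem hw (reflAlong_mem_reflGroup t)
  have hut : ℓ (w * σ t) ≤ ℓ (w * σ t * σ t) := by
    rw [mul_assoc, reflAlong_mul_self (hα.ip_self t), mul_one]; exact hwt.le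
  rcases reflLength_le_mul_or_apply_eq hα hw hst hwt hws with hus | ⟨hvu, hvt, heq⟩
  · -- `w α_s = u α_s + (α_s · α_t) u α_t` with `u = w s_t`
    have hlin := isLinearMap_of_mem_reflGroup hu_mem
    have hw_eq : w = w * σ t * σ t := by rw [mul_assoc, reflAlong_mul_self (hα.ip_self t), mul_one]
    rw [hw_eq]
    show (w * σ t) (α s + ip n (α s) (α t) • α t) ∈ _
    rw [hlin.map_add, hlin.map_smul]
    refine add_mem (ih _ hwt hu_mem hus rfl) (PointedCone.smul_mem _ ?_ (ih _ hwt hu_mem hut rfl))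
    rcases hα.ip_of_ne s t hst with h | h <;> norm_num [h]
  · rw [heq]
    exact ih _ (by omega) (mul_mem hu_mem (reflAlong_mem_reflGroup s)) hvt rfl

end positivity

section dominance

variable {ι : Type*} {α : ι → Fin (n + 1) → ℝ}

def IsDominant (n : ℕ) (α : ι → Fin (n + 1) → ℝ) (x : Fin (n + 1) → ℝ) : Prop :=
  ∀ i, 0 ≤ ip n x (α i)

lemma IsDominant.ip_nonneg_of_mem_hull {x y : Fin (n + 1) → ℝ} (hx : IsDominant n α x)
    (hy : y ∈ PointedCone.hull ℝ (Set.range α)) : 0 ≤ ip n x y := by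
  induction hy using Submodule.span_induction with
  | mem y hy => obtain ⟨i, rfl⟩ := hy; exact hx i
  | zero => rw [ip_zero_right]
  | add y z _ _ hy hz => rw [ip_add_right]; exact add_nonneg hy hz
  | smul c y _ hy => rw [Nonneg.mk_smul, ip_smul_right]; exact mul_nonneg c.2 hy

theorem IsDominant.apply_eq_self (hα : IsSimplyLaced n α) {w : Function.End (Fin (n + 1) → ℝ)}
    (hw : w ∈ reflGroup n α) {x : Fin (n + 1) → ℝ} (hx : IsDominant n α x)
    (hwx : IsDominant n α (w x)) : w x = x := by
  induction hk : reflLength n α w using Nat.strong_induction_on generalizing w with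
  | _ k ih =>
  subst hk
  by_cases h0 : reflLength n α w = 0
  · rw [eq_one_of_reflLength_eq_zero hw h0]; rfl
  obtain ⟨t, hwt⟩ := exists_reflLength_mul_reflAlong_lt hα.ip_self hw h0
  set u := w * reflAlong n (α t) with hu
  have hu_mem : u ∈ reflGroup n α := mul_mem hw (reflAlong_mem_reflGroup t)
  have hw_eq : w = u * reflAlong n (α t) := by
    rw [hu, mul_assoc, reflAlong_mul_self (hα.ip_self t), mul_one]
  have hut : u (α t) ∈ PointedCone.hull ℝ (Set.range α) :=
    apply_mem_hull_of_reflLength_le hα hu_mem (by rw [← hw_eq]; exact hwt.le)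
  have hwt_eq : w (α t) = -u (α t) := by
    rw [hw_eq]
    show u (reflAlong n (α t) (α t)) = _
    rw [reflAlong_self (hα.ip_self t), (isLinearMap_of_mem_reflGroup hu_mem).map_neg]
  -- `x · α_t = (w x) · (w α_t) = -(w x) · (u α_t) ≤ 0`, so `s_t` fixes `x`
  have hxt : ip n x (α t) = 0 := by
    refine le_antisymm ?_ (hx t)
    rw [← ip_apply_apply_of_mem_reflGroup hα.ip_self hw, hwt_eq, ip_neg_right, neg_nonpos]
    exact hwx.ip_nonneg_of_mem_hull hut
  have hux : u x = w x := by
    rw [hw_eq]; exact congrArg u (reflAlong_of_ip_eq_zero hxt).symm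
  rw [← hux] at hwx ⊢
  exact ih _ hwt hu_mem hwx rfl

lemma isDominant_apply_of_forall_ip_le (hα : ∀ i, ip n (α i) (α i) = -2)
    {p d : Fin (n + 1) → ℝ} (hp : ∀ i, 0 < ip n p (α i))
    {w v : Function.End (Fin (n + 1) → ℝ)} (hw : w ∈ reflGroup n α) (hv : v ∈ reflGroup n α)
    (hvw : v * w = 1) (hmin : ∀ u ∈ reflGroup n α, ip n d (w p) ≤ ip n d (u p)) :
    IsDominant n α (v d) := by
  intro i
  have hmove := ip_apply_left_of_mem_reflGroup hα hv hvw d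
  have hle : ip n d (w p) ≤ ip n d (w (reflAlong n (α i) p)) :=
    hmin _ (mul_mem hw (reflAlong_mem_reflGroup i))
  rw [← hmove, ← hmove, reflAlong_apply, ip_add_right, ip_smul_right] at hle
  nlinarith [hp i]

end dominance

def spatialNorm (n : ℕ) (x : Fin (n + 1) → ℝ) : ℝ := √(∑ k : Fin n, x k.succ ^ 2)

lemma spatialNorm_nonneg (x : Fin (n + 1) → ℝ) : 0 ≤ spatialNorm n x := Real.sqrt_nonneg _

lemma ip_self_eq_sq_sub_sq (x : Fin (n + 1) → ℝ) : ip n x x = x 0 ^ 2 - spatialNorm n x ^ 2 := by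
  rw [spatialNorm, Real.sq_sqrt (sum_nonneg fun _ _ => sq_nonneg _), ip]
  simp only [sq]

lemma sub_le_ip (x y : Fin (n + 1) → ℝ) :
    x 0 * y 0 - spatialNorm n x * spatialNorm n y ≤ ip n x y := by
  have := Real.sum_mul_le_sqrt_mul_sqrt univ (fun k : Fin n => x k.succ) (fun k => y k.succ)
  rw [ip]
  unfold spatialNorm
  linarith

lemma ip_le_add (x y : Fin (n + 1) → ℝ) :
    ip n x y ≤ x 0 * y 0 + spatialNorm n x * spatialNorm n y := by
  have := Real.sum_mul_le_sqrt_mul_sqrt univ (fun k : Fin n => -x k.succ) (fun k => y k.succ)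
  simp only [neg_mul, sum_neg_distrib, neg_sq] at this
  rw [ip]
  unfold spatialNorm
  linarith

lemma spatialNorm_lt_abs {x : Fin (n + 1) → ℝ} (hx : 0 < ip n x x) : spatialNorm n x < |x 0| := by
  rw [ip_self_eq_sq_sub_sq] at hx
  have h : spatialNorm n x ^ 2 < x 0 ^ 2 := by linarith
  simpa [abs_of_nonneg (spatialNorm_nonneg x)] using sq_lt_sq.mp h

lemma abs_apply_succ_le_spatialNorm (x : Fin (n + 1) → ℝ) (k : Fin n) :
    |x k.succ| ≤ spatialNorm n x :=
  Real.abs_le_sqrt (single_le_sum (fun j _ => sq_nonneg (x j.succ)) (mem_univ k))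

lemma abs_apply_le_of_timelike {x : Fin (n + 1) → ℝ} (hx : 0 < ip n x x) (hx0 : 0 < x 0)
    (j : Fin (n + 1)) : |x j| ≤ x 0 := by
  have := spatialNorm_lt_abs hx
  rw [abs_of_pos hx0] at this
  induction j using Fin.cases with
  | zero => exact (abs_of_pos hx0).le
  | succ k => exact (abs_apply_succ_le_spatialNorm x k).trans this.le

lemma zero_lt_of_timelike {x y : Fin (n + 1) → ℝ} (hx : 0 < ip n x x) (hx0 : 0 < x 0)
    (hy : 0 < ip n y y) (hxy : 0 < ip n x y) : 0 < y 0 := by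
  by_contra! hy0
  have hX := spatialNorm_lt_abs hx
  have hY := spatialNorm_lt_abs hy
  rw [abs_of_pos hx0] at hX
  rw [abs_of_nonpos hy0] at hY
  nlinarith [ip_le_add x y, spatialNorm_nonneg x, spatialNorm_nonneg y]

lemma sub_spatialNorm_mul_le_ip {d q : Fin (n + 1) → ℝ} (hq : 0 < ip n q q) (hq0 : 0 < q 0) :
    (d 0 - spatialNorm n d) * q 0 ≤ ip n d q := by
  have hQ := spatialNorm_lt_abs hq
  rw [abs_of_pos hq0] at hQ
  nlinarith [sub_le_ip d q, spatialNorm_nonneg d]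

lemma reflAlong_apply_zero_pos {l x : Fin (n + 1) → ℝ} (hl : ip n l l = -2) (hx : 0 < ip n x x)
    (hx0 : 0 < x 0) : 0 < reflAlong n l x 0 := by
  refine zero_lt_of_timelike hx hx0 (by rwa [ip_reflAlong_reflAlong hl]) ?_
  rw [reflAlong_apply, ip_add_right, ip_smul_right]
  nlinarith

lemma apply_zero_pos_of_mem_reflGroup {ι : Type*} {α : ι → Fin (n + 1) → ℝ}
    (hα : ∀ i, ip n (α i) (α i) = -2) {w : Function.End (Fin (n + 1) → ℝ)} (hw : w ∈ reflGroup n α)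
    {x : Fin (n + 1) → ℝ} (hx : 0 < ip n x x) (hx0 : 0 < x 0) : 0 < w x 0 := by
  induction hw using Submonoid.closure_induction generalizing x with
  | mem _ h => obtain ⟨i, rfl⟩ := h; exact reflAlong_apply_zero_pos (hα i) hx hx0
  | one => exact hx0
  | mul f g hf _ ihf ihg =>
    exact ihf (by rwa [ip_apply_apply_of_mem_reflGroup hα ‹g ∈ _›]) (ihg hx hx0)

lemma ip_mem_bot {x y : Fin (n + 1) → ℝ} (hx : ∀ j, x j ∈ (⊥ : Subring ℝ))
    (hy : ∀ j, y j ∈ (⊥ : Subring ℝ)) : ip n x y ∈ (⊥ : Subring ℝ) :=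
  sub_mem (mul_mem (hx 0) (hy 0)) (sum_mem fun k _ => mul_mem (hx k.succ) (hy k.succ))

lemma root_apply_mem_bot (i : Fin n) (j : Fin (n + 1)) : root n i j ∈ (⊥ : Subring ℝ) := by
  rw [root]
  split_ifs <;> dsimp only <;> split_ifs <;> simp

lemma apply_mem_bot_of_mem_Wgroup {w : Function.End (Fin (n + 1) → ℝ)} (hw : w ∈ Wgroup n)
    {x : Fin (n + 1) → ℝ} (hx : ∀ j, x j ∈ (⊥ : Subring ℝ)) (j : Fin (n + 1)) :
    w x j ∈ (⊥ : Subring ℝ) := by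
  induction hw using Submonoid.closure_induction generalizing x j with
  | mem _ h =>
    obtain ⟨i, rfl⟩ := h
    exact add_mem (hx j) (mul_mem (ip_mem_bot hx (root_apply_mem_bot i)) (root_apply_mem_bot i j))
  | one => exact hx j
  | mul f g _ _ ihf ihg => exact ihf (ihg hx) j

lemma finite_setOf_mem_bot_abs_le (B : ℝ) : {r : ℝ | r ∈ (⊥ : Subring ℝ) ∧ |r| ≤ B}.Finite := by
  refine ((Set.finite_Icc (-⌈B⌉) ⌈B⌉).image ((↑) : ℤ → ℝ)).subset ?_
  rintro r ⟨hr, hrB⟩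
  obtain ⟨z, rfl⟩ := Subring.mem_bot.mp hr
  have hB := Int.le_ceil B
  rw [abs_le] at hrB
  have hz : -(⌈B⌉ : ℝ) ≤ z := by linarith
  exact ⟨z, ⟨by exact_mod_cast hz, by exact_mod_cast hrB.2.trans hB⟩, rfl⟩

lemma ip_single_of_ne_zero (v : Fin (n + 1) → ℝ) {j : Fin (n + 1)} (hj : j ≠ 0) :
    ip n v (Pi.single j 1) = -v j := by
  obtain ⟨k, rfl⟩ := Fin.exists_succ_eq.mpr hj
  simp [ip, Pi.single_apply]

lemma root_of_val_ne_zero {i : Fin n} (hi : (i : ℕ) ≠ 0) :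
    root n i = Pi.single i.castSucc 1 - Pi.single i.succ 1 := by
  ext j
  simp only [root, hi, if_false, Pi.sub_apply, Pi.single_apply, Fin.ext_iff, Fin.val_castSucc,
    Fin.val_succ]
  split_ifs <;> first | omega | norm_num

lemma En_eq_single : En n = Pi.single (Fin.last n) 1 := by
  ext j
  simp [En, Pi.single_apply, Fin.ext_iff]

lemma ip_root_of_val_eq_zero (v : Fin (n + 1) → ℝ) {i : Fin n} (hi : (i : ℕ) = 0) :
    ip n v (root n i) = v 0 - ∑ k ∈ univ.filter (fun k : Fin n => (k : ℕ) < 3), mcoord n v k := by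
  simp only [ip, root, hi, if_true, Fin.val_zero, mul_one, sum_filter, mcoord, Fin.val_succ,
    Nat.add_one_ne_zero, if_false, Nat.add_one_le_iff, mul_ite, mul_neg_one, mul_zero]

lemma ip_root_succ (v : Fin (n + 2) → ℝ) (i : Fin n) :
    ip (n + 1) v (root (n + 1) i.succ) = mcoord (n + 1) v i.castSucc - mcoord (n + 1) v i.succ := by
  rw [root_of_val_ne_zero (Nat.succ_ne_zero i), ip_sub_right,
    ← Fin.succ_castSucc, ip_single_of_ne_zero _ (Fin.succ_ne_zero _),
    ip_single_of_ne_zero _ (Fin.succ_ne_zero _)]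
  simp only [mcoord]

lemma ip_En (v : Fin (n + 2) → ℝ) : ip (n + 1) v (En (n + 1)) = mcoord (n + 1) v (Fin.last n) := by
  rw [En_eq_single, ← Fin.succ_last, ip_single_of_ne_zero _ (Fin.succ_ne_zero _)]
  rfl

lemma sum_filter_val_lt_three (hn : 3 ≤ n) (f : Fin n → ℝ) :
    ∑ k ∈ univ.filter (fun k : Fin n => (k : ℕ) < 3), f k =
      f ⟨0, by omega⟩ + f ⟨1, by omega⟩ + f ⟨2, by omega⟩ := by
  have h : univ.filter (fun k : Fin n => (k : ℕ) < 3) =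
      {⟨0, by omega⟩, ⟨1, by omega⟩, ⟨2, by omega⟩} := by
    ext k
    simp only [mem_filter, mem_univ, true_and, mem_insert, mem_singleton, Fin.ext_iff]
    omega
  rw [h, sum_insert (by simp [Fin.ext_iff]), sum_pair (by simp [Fin.ext_iff]), add_assoc]

lemma isReducedVec_iff (hn : 0 < n) (v : Fin (n + 1) → ℝ) :
    IsReducedVec n v ↔ IsDominant n (root n) v ∧ 0 ≤ ip n v (En n) := by
  obtain ⟨n, rfl⟩ := Nat.exists_eq_add_one_of_ne_zero hn.ne'
  have hdom : IsDominant (n + 1) (root (n + 1)) v ↔ Antitone (mcoord (n + 1) v) ∧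
      ∑ k ∈ univ.filter (fun k : Fin (n + 1) => (k : ℕ) < 3), mcoord (n + 1) v k ≤ v 0 := by
    rw [Fin.antitone_iff_succ_le, IsDominant, Fin.forall_fin_succ, ip_root_of_val_eq_zero v rfl]
    simp only [ip_root_succ, sub_nonneg, and_comm]
  rw [hdom, ip_En, IsReducedVec]
  constructor
  · rintro ⟨ha, hpos, hs⟩
    exact ⟨⟨ha, hs⟩, hpos _⟩
  · rintro ⟨⟨ha, hs⟩, hl⟩
    exact ⟨ha, fun i => hl.trans (ha (Fin.le_last i)), hs⟩

lemma ip_root_zero (hn : 3 ≤ n) (v : Fin (n + 1) → ℝ) {i : Fin n} (hi : (i : ℕ) = 0) :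
    ip n v (root n i) = v 0 + v ⟨1, by omega⟩ + v ⟨2, by omega⟩ + v ⟨3, by omega⟩ := by
  rw [ip_root_of_val_eq_zero v hi, sum_filter_val_lt_three hn]
  simp only [mcoord, Fin.succ_mk]
  ring

lemma isSimplyLaced_root (hn : 3 ≤ n) : IsSimplyLaced n (root n) := by
  obtain ⟨n, rfl⟩ : ∃ m, n = m + 1 := ⟨n - 1, by omega⟩
  constructor
  · intro i
    induction i using Fin.cases with
    | zero =>
      rw [ip_root_zero hn _ rfl]
      simp only [root, Fin.coe_ofNat_eq_mod, Nat.zero_mod, ↓reduceIte, one_ne_zero,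
        OfNat.ofNat_ne_zero, Nat.one_le_ofNat, Nat.reduceLeDiff, le_refl]
      norm_num
    | succ i =>
      rw [ip_root_succ]
      simp only [mcoord, root, Fin.val_succ, Nat.add_eq_zero_iff, one_ne_zero, and_false,
        ↓reduceIte, Fin.val_castSucc, Nat.add_eq_left, neg_neg]
      norm_num
  · intro i j hij
    induction i using Fin.cases with
    | zero =>
      induction j using Fin.cases with
      | zero => exact absurd rfl hij
      | succ j =>
        rw [ip_comm, ip_root_zero hn _ rfl]
        simp only [root, Fin.val_succ, Nat.add_eq_zero_iff, one_ne_zero, and_false, ↓reduceIte,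
          Fin.coe_ofNat_eq_mod, Nat.zero_mod, Nat.right_eq_add, OfNat.ofNat_ne_zero, zero_add,
          Nat.reduceEqDiff]
        split_ifs <;> first | omega | norm_num
    | succ i =>
      induction j using Fin.cases with
      | zero =>
        rw [ip_root_zero hn _ rfl]
        simp only [root, Fin.val_succ, Nat.add_eq_zero_iff, one_ne_zero, and_false, ↓reduceIte,
          Fin.coe_ofNat_eq_mod, Nat.zero_mod, Nat.right_eq_add, OfNat.ofNat_ne_zero, zero_add,
          Nat.reduceEqDiff]
        split_ifs <;> first | omega | norm_num
      | succ j =>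
        rw [ne_eq, Fin.succ_inj, Fin.ext_iff] at hij
        rw [ip_root_succ]
        simp only [mcoord, root, Fin.val_succ, Nat.add_eq_zero_iff, one_ne_zero, and_false,
          ↓reduceIte, Fin.val_castSucc, Nat.add_right_cancel_iff, sub_neg_eq_add]
        split_ifs <;> first | omega | norm_num

lemma apply_mem_EK {w : Function.End (Fin (n + 1) → ℝ)} (hw : w ∈ Wgroup n)
    {E : Fin (n + 1) → ℝ} (hE : E ∈ EK n) : w E ∈ EK n := by
  obtain ⟨w', hw', rfl⟩ := hE
  exact ⟨w * w', mul_mem hw hw', rfl⟩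

lemma single_mem_EK (j : Fin (n + 1)) (hj : j ≠ 0) : Pi.single j 1 ∈ EK n := by
  induction j using Fin.reverseInduction with
  | last => rw [← En_eq_single]; exact ⟨1, one_mem _, rfl⟩
  | cast k ih =>
    have hk : (k : ℕ) ≠ 0 := fun h => hj (Fin.ext h)
    have hs : reflAlong n (root n k) (Pi.single k.succ 1) = Pi.single k.castSucc 1 := by
      rw [reflAlong_apply, root_of_val_ne_zero hk, ip_sub_right, ip_single_of_ne_zero _ hj,
        ip_single_of_ne_zero _ (Fin.succ_ne_zero k)]
      simp [k.castSucc_lt_succ.ne]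
    rw [← hs]
    exact apply_mem_EK (reflAlong_mem_reflGroup k) (ih (Fin.succ_ne_zero k))

lemma zero_lt_of_forall_ip_EK_pos (hn : 3 ≤ n) {d : Fin (n + 1) → ℝ}
    (hdE : ∀ E ∈ EK n, 0 < ip n d E) : 0 < d 0 := by
  have hE : ∀ j : Fin (n + 1), j ≠ 0 → d j < 0 := fun j hj =>
    neg_pos.mp (ip_single_of_ne_zero d hj ▸ hdE _ (single_mem_EK j hj))
  -- `s_{l_0} E_3 = H - E_1 - E_2`
  have h3 : (⟨3, by omega⟩ : Fin (n + 1)) ≠ 0 := by simp [Fin.ext_iff]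
  have h3l : ip n (Pi.single ⟨3, by omega⟩ 1) (root n ⟨0, by omega⟩) = 1 := by
    rw [ip_comm, ip_single_of_ne_zero _ h3]
    simp [root]
  have hH := hdE _ (apply_mem_EK (reflAlong_mem_reflGroup (α := root n) ⟨0, by omega⟩)
    (single_mem_EK _ h3))
  rw [reflAlong_apply, ip_add_right, ip_smul_right, h3l, ip_root_zero hn _ rfl,
    ip_single_of_ne_zero d h3] at hH
  linarith [hE ⟨1, by omega⟩ (by simp [Fin.ext_iff]), hE ⟨2, by omega⟩ (by simp [Fin.ext_iff])]

-- `ρ = (n² | n, n - 1, …, 1)`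
def rho (n : ℕ) : Fin (n + 1) → ℝ := fun j => if (j : ℕ) = 0 then (n : ℝ) ^ 2 else (j : ℝ) - (n + 1)

lemma rho_apply_mem_bot (j : Fin (n + 1)) : rho n j ∈ (⊥ : Subring ℝ) := by
  rw [rho]
  split_ifs
  · exact Subring.mem_bot.mpr ⟨(n : ℤ) ^ 2, by push_cast; ring⟩
  · exact Subring.mem_bot.mpr ⟨(j : ℤ) - (n + 1), by push_cast; ring⟩

lemma ip_rho_root_pos (hn : 3 ≤ n) (i : Fin n) : 0 < ip n (rho n) (root n i) := by
  by_cases hi : (i : ℕ) = 0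
  · rw [ip_root_zero hn _ hi]
    simp only [rho, Fin.val_zero, if_true, one_ne_zero, OfNat.ofNat_ne_zero, if_false,
      Nat.cast_ofNat, Nat.cast_one]
    nlinarith [sq_nonneg ((n : ℝ) - 2)]
  · rw [root_of_val_ne_zero hi, ip_sub_right, ip_single_of_ne_zero _ (Fin.succ_ne_zero i),
      ip_single_of_ne_zero _ (fun h => hi (congrArg Fin.val h))]
    simp [rho, hi]

lemma ip_rho_self_pos (hn : 2 ≤ n) : 0 < ip n (rho n) (rho n) := by
  have hbound : ∀ k : Fin n, rho n k.succ * rho n k.succ ≤ (n : ℝ) ^ 2 := fun k => by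
    have := k.isLt
    have : (k : ℝ) + 1 ≤ n := by exact_mod_cast this
    simp only [rho, Fin.val_succ, Nat.add_one_ne_zero, if_false, Nat.cast_add, Nat.cast_one]
    nlinarith [Nat.cast_nonneg (α := ℝ) k]
  have hsum := sum_le_sum fun k (_ : k ∈ univ) => hbound k
  simp only [sum_const, card_univ, Fintype.card_fin, nsmul_eq_mul] at hsum
  have : (2 : ℝ) ≤ n := by exact_mod_cast hn
  have h0 : rho n 0 = (n : ℝ) ^ 2 := if_pos rfl
  rw [ip, h0]
  nlinarith

lemma exists_forall_ip_apply_rho_le (hn : 3 ≤ n) {d : Fin (n + 1) → ℝ} (hdd : 0 < ip n d d)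
    (hd0 : 0 < d 0) : ∃ w ∈ Wgroup n, ∀ u ∈ Wgroup n, ip n d (w (rho n)) ≤ ip n d (u (rho n)) := by
  have hα := (isSimplyLaced_root hn).ip_self
  have hρ := ip_rho_self_pos (n := n) (by omega)
  have hρ0 : 0 < rho n 0 := by simp only [rho, Fin.val_zero, if_true]; positivity
  set C := ip n d (rho n)
  have hD : 0 < d 0 - spatialNorm n d := by
    have := spatialNorm_lt_abs hdd
    rw [abs_of_pos hd0] at this
    linarith
  set S := {q | ∃ u ∈ Wgroup n, u (rho n) = q ∧ ip n d q ≤ C}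
  -- orbit points are integral, and those in `S` are bounded since `d` is future timelike
  have hS : S.Finite := by
    refine (Set.Finite.pi' fun _ =>
      finite_setOf_mem_bot_abs_le (C / (d 0 - spatialNorm n d))).subset ?_
    rintro _ ⟨u, hu, rfl, huC⟩ j
    have hq := ip_apply_apply_of_mem_reflGroup hα hu (rho n) (rho n) ▸ hρ
    have hq0 := apply_zero_pos_of_mem_reflGroup hα hu hρ hρ0
    refine ⟨apply_mem_bot_of_mem_Wgroup hu rho_apply_mem_bot j,
      (abs_apply_le_of_timelike hq hq0 j).trans ?_⟩
    rw [le_div_iff₀ hD, mul_comm]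
    exact (sub_spatialNorm_mul_le_ip hq hq0).trans huC
  obtain ⟨_, ⟨w, hw, rfl, hwC⟩, hmin⟩ :=
    Set.exists_min_image S (ip n d) hS ⟨rho n, 1, one_mem _, rfl, le_rfl⟩
  refine ⟨w, hw, fun u hu => ?_⟩
  by_cases huC : ip n d (u (rho n)) ≤ C
  · exact hmin _ ⟨u, hu, rfl, huC⟩
  · linarith

end

theorem exists_unique_reduced_representative
    (n : ℕ) (hn : 3 ≤ n) (d : Fin (n + 1) → ℝ)
    (hdd : 0 < ip n d d)
    (hdE : ∀ E ∈ EK n, 0 < ip n d E) :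
    (∃ w ∈ Wgroup n, IsReducedVec n (w d)) ∧
    (∀ w₁ ∈ Wgroup n, ∀ w₂ ∈ Wgroup n,
      IsReducedVec n (w₁ d) → IsReducedVec n (w₂ d) → w₁ d = w₂ d) := by
  have hα := isSimplyLaced_root hn
  refine ⟨?_, fun w₁ hw₁ w₂ hw₂ h₁ h₂ => ?_⟩
  · obtain ⟨w, hw, hmin⟩ :=
      exists_forall_ip_apply_rho_le hn hdd (zero_lt_of_forall_ip_EK_pos hn hdE)
    obtain ⟨v, hv, hvw, -⟩ := exists_inverse_mem_reflGroup hα.ip_self hw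
    refine ⟨v, hv, (isReducedVec_iff (by omega) _).mpr
      ⟨isDominant_apply_of_forall_ip_le hα.ip_self (ip_rho_root_pos hn) hw hv hvw hmin, ?_⟩⟩
    rw [ip_apply_left_of_mem_reflGroup hα.ip_self hv hvw]
    exact (hdE _ (apply_mem_EK hw ⟨1, one_mem _, rfl⟩)).le
  · rw [isReducedVec_iff (by omega)] at h₁ h₂
    obtain ⟨v₁, hv₁, hv₁w₁, -⟩ := exists_inverse_mem_reflGroup hα.ip_self hw₁
    have hw₂d : (w₂ * v₁) (w₁ d) = w₂ d := congrArg w₂ (congrFun hv₁w₁ d)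
    rw [← hw₂d] at h₂ ⊢
    exact (h₁.1.apply_eq_self hα (mul_mem hw₂ hv₁) h₂.1).symm

end
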